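/- arXiv:2011.01796 — 2 statements merged into one kernel-verified Lean document; each statement's English description precedes it below -/
import Mathlib

section
/- (Forward-backward method, Lipschitz case.) Let A be a maximally α_A-monotone set-valued operator on H, let B : H → H be α_B-monotone and κ-Lipschitz (κ > 0), let θ, σ_A, σ_B > 0 satisfy θα_A + σ_A > 0 and θα_B + σ_B > 0, let γ ∈ (0, 2(θα_B + σ_B)/(θκ + σ_B)²), and let q ∈ H. Let (x_k) be a sequence in H such that for all k: (1/(1+γσ_A))·((1 − γσ_B)x_k − γθ·B(x_k) + γ(σ_A+σ_B)q) − x_{k+1} ∈ (γθ/(1+γσ_A))•A(x_{k+1}). Then there is a unique x⋆ ∈ H with q − x⋆ ∈ (θ/(σ_A+σ_B))•(A+B)(x⋆), and (x_k) converges R-linearly to x⋆. -/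
/-!
With `λ = γθ / (1 + γσ_A)` and `F = forwardStep B θ σA σB γ q`, the iteration reads
`x_{k+1} = J_{λA} (F x_k)`. Since `σ_B • id + θ • B` is `(θα_B + σ_B)`-monotone and
`(θκ + σ_B)`-Lipschitz, the forward step `z ↦ z - γ (σ_B z + θ B z)` is Lipschitz with constant
`√(1 - 2γ(θα_B + σ_B) + γ²(θκ + σ_B)²)`, which is `< 1` exactly by the bound on `γ`. The factor
`1 / (1 + γσ_A)` in `F` and the `1 / (1 + λα_A)`-Lipschitz resolvent together contribute
`1 / (1 + γ(θα_A + σ_A)) < 1`, so the iteration is a contraction. The iterates are therefore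
Cauchy, and their limit is a fixed point because the graph of a maximally monotone operator is
sequentially closed. Fixed points are exactly the solutions of `q - x ∈ (θ/(σ_A+σ_B)) • (A + B) x`,
and the contraction makes them unique.
-/

open scoped RealInnerProductSpace Pointwise

open Filter Topology

def IsMonotoneOp {H : Type*} [NormedAddCommGroup H] [InnerProductSpace ℝ H]
    (α : ℝ) (A : H → Set H) : Prop :=
  ∀ x y u v : H, u ∈ A x → v ∈ A y → α * ‖x - y‖ ^ 2 ≤ ⟪x - y, u - v⟫

def IsMaxMonotoneOp {H : Type*} [NormedAddCommGroup H] [InnerProductSpace ℝ H]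
    (α : ℝ) (A : H → Set H) : Prop :=
  IsMonotoneOp α A ∧
    ∀ x u : H, (∀ y v : H, v ∈ A y → α * ‖x - y‖ ^ 2 ≤ ⟪x - y, u - v⟫) → u ∈ A x

theorem Real.le_sqrt_mul_of_sq_le {a b δ : ℝ} (ha : 0 ≤ a) (hb : 0 ≤ b)
    (h : a ^ 2 ≤ δ * b ^ 2) : a ≤ √δ * b :=
  calc a = √(a ^ 2) := (Real.sqrt_sq ha).symm
    _ ≤ √(δ * b ^ 2) := Real.sqrt_le_sqrt h
    _ = √δ * b := by rw [Real.sqrt_mul' _ (sq_nonneg b), Real.sqrt_sq hb]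

section Operators

variable {H : Type*} [NormedAddCommGroup H] [InnerProductSpace ℝ H]

theorem isMonotoneOp_singleton_iff {α : ℝ} {B : H → H} :
    IsMonotoneOp α (fun x => {B x}) ↔ ∀ x y, α * ‖x - y‖ ^ 2 ≤ ⟪x - y, B x - B y⟫ :=
  ⟨fun h x y => h x y _ _ rfl rfl, by rintro h x y _ _ rfl rfl; exact h x y⟩

theorem IsMaxMonotoneOp.mem_of_tendsto {α : ℝ} {A : H → Set H} (hA : IsMaxMonotoneOp α A)
    {x u : ℕ → H} {x₀ u₀ : H} (hx : Tendsto x atTop (𝓝 x₀)) (hu : Tendsto u atTop (𝓝 u₀))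
    (hmem : ∀ k, u k ∈ A (x k)) : u₀ ∈ A x₀ := by
  refine hA.2 x₀ u₀ fun y v hv => ?_
  have hleft := ((hx.sub_const y).norm.pow 2).const_mul α
  have hright := (hx.sub_const y).inner (𝕜 := ℝ) (hu.sub_const v)
  exact le_of_tendsto_of_tendsto' hleft hright fun k => hA.1 _ _ _ _ (hmem k) hv

theorem IsMaxMonotoneOp.smul_mem_of_tendsto {α t : ℝ} {A : H → Set H}
    (hA : IsMaxMonotoneOp α A) (ht : t ≠ 0) {x u : ℕ → H} {x₀ u₀ : H}
    (hx : Tendsto x atTop (𝓝 x₀)) (hu : Tendsto u atTop (𝓝 u₀))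
    (hmem : ∀ k, u k ∈ t • A (x k)) : u₀ ∈ t • A x₀ := by
  simp only [Set.mem_smul_set_iff_inv_smul_mem₀ ht] at hmem ⊢
  exact hA.mem_of_tendsto hx (hu.const_smul _) hmem

/-- The resolvent `J_{tA}` of an `α`-monotone `A` is `1 / (1 + t α)`-Lipschitz. -/
theorem IsMonotoneOp.mul_norm_sub_le_of_mem_smul {α t : ℝ} {A : H → Set H}
    (hA : IsMonotoneOp α A) (ht : 0 ≤ t) {u v z w : H}
    (hz : u - z ∈ t • A z) (hw : v - w ∈ t • A w) :
    (1 + t * α) * ‖z - w‖ ≤ ‖u - v‖ := by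
  obtain ⟨a, ha, hza⟩ : ∃ a ∈ A z, t • a = u - z := hz
  obtain ⟨b, hb, hwb⟩ : ∃ b ∈ A w, t • b = v - w := hw
  have key : (1 + t * α) * ‖z - w‖ ^ 2 ≤ ⟪z - w, u - v⟫ := by
    have hsplit : u - v = (z - w) + t • (a - b) := by rw [smul_sub, hza, hwb]; abel
    rw [hsplit, inner_add_right, real_inner_self_eq_norm_sq, real_inner_smul_right]
    nlinarith [mul_le_mul_of_nonneg_left (hA z w a b ha hb) ht]
  rcases (norm_nonneg (z - w)).eq_or_lt with h0 | hpos
  · rw [← h0, mul_zero]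
    exact norm_nonneg _
  · refine le_of_mul_le_mul_left ?_ hpos
    calc ‖z - w‖ * ((1 + t * α) * ‖z - w‖) = (1 + t * α) * ‖z - w‖ ^ 2 := by ring
      _ ≤ ⟪z - w, u - v⟫ := key
      _ ≤ ‖z - w‖ * ‖u - v‖ := real_inner_le_norm _ _

theorem norm_sub_map_sub_sub_map_sq_le {μ L : ℝ} {C : H → H}
    (hmono : ∀ z w, μ * ‖z - w‖ ^ 2 ≤ ⟪z - w, C z - C w⟫)
    (hLip : ∀ z w, ‖C z - C w‖ ≤ L * ‖z - w‖) (z w : H) :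
    ‖(z - C z) - (w - C w)‖ ^ 2 ≤ (1 - 2 * μ + L ^ 2) * ‖z - w‖ ^ 2 := by
  have hLip2 : ‖C z - C w‖ ^ 2 ≤ L ^ 2 * ‖z - w‖ ^ 2 := by
    rw [← mul_pow]
    exact pow_le_pow_left₀ (norm_nonneg _) (hLip z w) 2
  calc ‖(z - C z) - (w - C w)‖ ^ 2
      = ‖z - w‖ ^ 2 - 2 * ⟪z - w, C z - C w⟫ + ‖C z - C w‖ ^ 2 := by
        rw [show (z - C z) - (w - C w) = (z - w) - (C z - C w) by abel, norm_sub_sq_real]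
    _ ≤ (1 - 2 * μ + L ^ 2) * ‖z - w‖ ^ 2 := by linarith [hmono z w]

theorem norm_forward_sub_forward_sq_le {α κ s t : ℝ} {B : H → H} (hs : 0 ≤ s) (ht : 0 ≤ t)
    (hmono : ∀ z w, α * ‖z - w‖ ^ 2 ≤ ⟪z - w, B z - B w⟫)
    (hLip : ∀ z w, ‖B z - B w‖ ≤ κ * ‖z - w‖) (z w : H) :
    ‖((1 - s) • z - t • B z) - ((1 - s) • w - t • B w)‖ ^ 2
      ≤ (1 - 2 * (s + t * α) + (s + t * κ) ^ 2) * ‖z - w‖ ^ 2 := by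
  have hsum : ∀ z w, (s • z + t • B z) - (s • w + t • B w) = s • (z - w) + t • (B z - B w) :=
    fun z w => by module
  have hmono' : ∀ z w,
      (s + t * α) * ‖z - w‖ ^ 2 ≤ ⟪z - w, (s • z + t • B z) - (s • w + t • B w)⟫ := by
    intro z w
    rw [hsum, inner_add_right, real_inner_smul_right, real_inner_smul_right,
      real_inner_self_eq_norm_sq]
    nlinarith [mul_le_mul_of_nonneg_left (hmono z w) ht]
  have hLip' : ∀ z w, ‖(s • z + t • B z) - (s • w + t • B w)‖ ≤ (s + t * κ) * ‖z - w‖ := by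
    intro z w
    rw [hsum]
    calc ‖s • (z - w) + t • (B z - B w)‖ ≤ s * ‖z - w‖ + t * ‖B z - B w‖ := by
          refine (norm_add_le _ _).trans_eq ?_
          rw [norm_smul, norm_smul, Real.norm_of_nonneg hs, Real.norm_of_nonneg ht]
      _ ≤ (s + t * κ) * ‖z - w‖ := by nlinarith [mul_le_mul_of_nonneg_left (hLip z w) ht]
  have h := norm_sub_map_sub_sub_map_sq_le hmono' hLip' z w
  convert h using 3; module

end Operators

section ForwardBackward

variable {H : Type*} [NormedAddCommGroup H] [InnerProductSpace ℝ H]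

noncomputable def forwardStep (B : H → H) (θ σA σB γ : ℝ) (q z : H) : H :=
  (1 / (1 + γ * σA)) • ((1 - γ * σB) • z - (γ * θ) • B z + (γ * (σA + σB)) • q)

noncomputable def forwardBackwardRate (αA αB κ θ σA σB γ : ℝ) : ℝ :=
  √(1 - 2 * γ * (θ * αB + σB) + γ ^ 2 * (θ * κ + σB) ^ 2) / (1 + γ * (θ * αA + σA))

variable {B : H → H} {αA αB κ θ σA σB γ : ℝ} {q : H}

theorem continuous_forwardStep (hLip : ∀ x y : H, ‖B x - B y‖ ≤ κ * ‖x - y‖) :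
    Continuous (forwardStep B θ σA σB γ q) := by
  have hB : Continuous B :=
    (LipschitzWith.of_dist_le' fun x y => by simpa only [dist_eq_norm] using hLip x y).continuous
  unfold forwardStep
  fun_prop

theorem norm_forwardStep_sub_le (hθ : 0 < θ) (hσA : 0 < σA) (hσB : 0 < σB) (hγ : 0 < γ)
    (hBmono : ∀ x y, αB * ‖x - y‖ ^ 2 ≤ ⟪x - y, B x - B y⟫)
    (hLip : ∀ x y : H, ‖B x - B y‖ ≤ κ * ‖x - y‖) (z w : H) :
    ‖forwardStep B θ σA σB γ q z - forwardStep B θ σA σB γ q w‖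
      ≤ √(1 - 2 * γ * (θ * αB + σB) + γ ^ 2 * (θ * κ + σB) ^ 2) / (1 + γ * σA) * ‖z - w‖ := by
  have hdiff : forwardStep B θ σA σB γ q z - forwardStep B θ σA σB γ q w
      = (1 / (1 + γ * σA)) •
          (((1 - γ * σB) • z - (γ * θ) • B z) - ((1 - γ * σB) • w - (γ * θ) • B w)) := by
    unfold forwardStep
    module
  have hsq := norm_forward_sub_forward_sq_le (by positivity : 0 ≤ γ * σB)
    (by positivity : 0 ≤ γ * θ) hBmono hLip z w
  have hG := Real.le_sqrt_mul_of_sq_le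
    (δ := 1 - 2 * γ * (θ * αB + σB) + γ ^ 2 * (θ * κ + σB) ^ 2)
    (norm_nonneg _) (norm_nonneg _) (hsq.trans_eq (by ring))
  rw [hdiff, norm_smul, Real.norm_of_nonneg (by positivity), one_div_mul_eq_div, div_mul_eq_mul_div]
  exact div_le_div_of_nonneg_right hG (by positivity)

theorem norm_sub_le_forwardBackwardRate_mul {A : H → Set H} (hA : IsMonotoneOp αA A)
    (hA' : 0 < θ * αA + σA) (hθ : 0 < θ) (hσA : 0 < σA) (hσB : 0 < σB) (hγ : 0 < γ)
    (hBmono : ∀ x y, αB * ‖x - y‖ ^ 2 ≤ ⟪x - y, B x - B y⟫)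
    (hLip : ∀ x y : H, ‖B x - B y‖ ≤ κ * ‖x - y‖) ⦃z w z' w' : H⦄
    (hz : forwardStep B θ σA σB γ q z - z' ∈ (γ * θ / (1 + γ * σA)) • A z')
    (hw : forwardStep B θ σA σB γ q w - w' ∈ (γ * θ / (1 + γ * σA)) • A w') :
    ‖z' - w'‖ ≤ forwardBackwardRate αA αB κ θ σA σB γ * ‖z - w‖ := by
  have hres := hA.mul_norm_sub_le_of_mem_smul (by positivity) hz hw
  have hF := norm_forwardStep_sub_le (q := q) hθ hσA hσB hγ hBmono hLip z w
  have hpos : 0 < 1 + γ * σA := by positivity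
  have hcoef : 1 + γ * (θ * αA + σA) = (1 + γ * σA) * (1 + γ * θ / (1 + γ * σA) * αA) := by
    field_simp
    ring
  unfold forwardBackwardRate
  rw [div_mul_eq_mul_div, le_div_iff₀ (by nlinarith), hcoef]
  calc ‖z' - w'‖ * ((1 + γ * σA) * (1 + γ * θ / (1 + γ * σA) * αA))
      = (1 + γ * σA) * ((1 + γ * θ / (1 + γ * σA) * αA) * ‖z' - w'‖) := by ring
    _ ≤ (1 + γ * σA) * (√(1 - 2 * γ * (θ * αB + σB) + γ ^ 2 * (θ * κ + σB) ^ 2) / (1 + γ * σA)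
          * ‖z - w‖) := mul_le_mul_of_nonneg_left (hres.trans hF) hpos.le
    _ = _ := by field_simp

theorem forwardBackwardRate_nonneg (hA' : 0 < θ * αA + σA) (hγ : 0 < γ) :
    0 ≤ forwardBackwardRate αA αB κ θ σA σB γ :=
  div_nonneg (Real.sqrt_nonneg _) (by nlinarith [mul_pos hγ hA'])

theorem forwardBackwardRate_lt_one (hκ : 0 < κ) (hθ : 0 < θ) (hσB : 0 < σB)
    (hA' : 0 < θ * αA + σA) (hγ : 0 < γ) (hγ' : γ < 2 * (θ * αB + σB) / (θ * κ + σB) ^ 2) :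
    forwardBackwardRate αA αB κ θ σA σB γ < 1 := by
  have hδ : 1 - 2 * γ * (θ * αB + σB) + γ ^ 2 * (θ * κ + σB) ^ 2 < 1 := by
    have := (lt_div_iff₀ (by positivity)).mp hγ'
    nlinarith
  have hsqrt : √(1 - 2 * γ * (θ * αB + σB) + γ ^ 2 * (θ * κ + σB) ^ 2) < 1 :=
    (Real.sqrt_lt' one_pos).mpr (by simpa using hδ)
  rw [forwardBackwardRate, div_lt_one (by nlinarith [mul_pos hγ hA'])]
  nlinarith [mul_pos hγ hA']

theorem forwardStep_sub_self_mem_iff {A : H → Set H} (hθ : 0 < θ) (hσA : 0 < σA)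
    (hσB : 0 < σB) (hγ : 0 < γ) {z : H} :
    forwardStep B θ σA σB γ q z - z ∈ (γ * θ / (1 + γ * σA)) • A z ↔
      q - z ∈ (θ / (σA + σB)) • {w : H | ∃ u ∈ A z, w = u + B z} := by
  have key : ∀ a : H, (γ * θ / (1 + γ * σA)) • a = forwardStep B θ σA σB γ q z - z ↔
      (θ / (σA + σB)) • (a + B z) = q - z := by
    intro a
    set D := (σA + σB) • (q - z) - θ • (a + B z)
    have h₁ : forwardStep B θ σA σB γ q z - z - (γ * θ / (1 + γ * σA)) • a
        = (γ / (1 + γ * σA)) • D := by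
      unfold forwardStep
      match_scalars <;> field_simp
      ring
    have h₂ : q - z - (θ / (σA + σB)) • (a + B z) = (σA + σB)⁻¹ • D := by
      match_scalars <;> field_simp
    have e₁ : (γ * θ / (1 + γ * σA)) • a = forwardStep B θ σA σB γ q z - z ↔ D = 0 := by
      rw [eq_comm, ← sub_eq_zero, h₁, smul_eq_zero, or_iff_right (by positivity)]
    have e₂ : (θ / (σA + σB)) • (a + B z) = q - z ↔ D = 0 := by
      rw [eq_comm, ← sub_eq_zero, h₂, smul_eq_zero, or_iff_right (by positivity)]
    exact e₁.trans e₂.symm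
  constructor
  · rintro ⟨a, ha, h⟩
    exact ⟨a + B z, ⟨a, ha, rfl⟩, (key a).mp h⟩
  · rintro ⟨_, ⟨a, ha, rfl⟩, h⟩
    exact ⟨a, ha, (key a).mpr h⟩

end ForwardBackward

theorem forward_backward_lipschitz_general {H : Type*} [NormedAddCommGroup H] [InnerProductSpace ℝ H]
    [CompleteSpace H]
    (A : H → Set H) (B : H → H) (αA αB κ θ σA σB γ : ℝ) (q : H)
    (hA : IsMaxMonotoneOp αA A)
    (hBmono : IsMonotoneOp αB (fun x => {B x}))
    (hκ : 0 < κ) (hLip : ∀ x y : H, ‖B x - B y‖ ≤ κ * ‖x - y‖)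
    (hθ : 0 < θ) (hσA : 0 < σA) (hσB : 0 < σB)
    (hA' : 0 < θ * αA + σA)
    (hγ : 0 < γ) (hγ' : γ < 2 * (θ * αB + σB) / (θ * κ + σB) ^ 2)
    (x : ℕ → H)
    (hx : ∀ k : ℕ,
      (1 / (1 + γ * σA)) •
          ((1 - γ * σB) • x k - (γ * θ) • B (x k) + (γ * (σA + σB)) • q) - x (k + 1) ∈
        (γ * θ / (1 + γ * σA)) • A (x (k + 1))) :
    ∃ xs : H,
      (q - xs ∈ (θ / (σA + σB)) • {w : H | ∃ u ∈ A xs, w = u + B xs}) ∧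
        (∀ z : H, q - z ∈ (θ / (σA + σB)) • {w : H | ∃ u ∈ A z, w = u + B z} → z = xs) ∧
          ∃ M c : ℝ, 0 ≤ M ∧ 0 ≤ c ∧ c < 1 ∧ ∀ k : ℕ, ‖x k - xs‖ ≤ M * c ^ k := by
  have hcontr := norm_sub_le_forwardBackwardRate_mul (q := q) hA.1 hA' hθ hσA hσB hγ
    (isMonotoneOp_singleton_iff.mp hBmono) hLip
  set c := forwardBackwardRate αA αB κ θ σA σB γ
  have hc0 : 0 ≤ c := forwardBackwardRate_nonneg hA' hγ
  have hc1 : c < 1 := forwardBackwardRate_lt_one hκ hθ hσB hA' hγ hγ'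
  have hstep (k : ℕ) : dist (x k) (x (k + 1)) ≤ dist (x 0) (x 1) * c ^ k := by
    simpa only [dist_eq_norm, mul_comm] using
      le_geom (u := fun j => ‖x j - x (j + 1)‖) hc0 k fun j _ => hcontr (hx j) (hx (j + 1))
  obtain ⟨xs, hlim⟩ := cauchySeq_tendsto_of_complete (cauchySeq_of_le_geometric c _ hc1 hstep)
  have hlim' := hlim.comp (tendsto_add_atTop_nat 1)
  have hfix : forwardStep B θ σA σB γ q xs - xs ∈ (γ * θ / (1 + γ * σA)) • A xs :=
    hA.smul_mem_of_tendsto (by positivity) hlim'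
      (((continuous_forwardStep hLip).tendsto xs).comp hlim |>.sub hlim') hx
  refine ⟨xs, (forwardStep_sub_self_mem_iff hθ hσA hσB hγ).mp hfix, fun z hz => ?_,
    ‖x 0 - xs‖, c, norm_nonneg _, hc0, hc1, fun k => ?_⟩
  · have := hcontr ((forwardStep_sub_self_mem_iff hθ hσA hσB hγ).mpr hz) hfix
    have hzero : ‖z - xs‖ = 0 := by nlinarith [norm_nonneg (z - xs)]
    exact sub_eq_zero.mp (norm_eq_zero.mp hzero)
  · simpa only [mul_comm] using
      le_geom (u := fun j => ‖x j - xs‖) hc0 k fun j _ => hcontr (hx j) hfix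

/-- Forward-backward method (Lipschitz case): the iterates converge R-linearly to the unique
point `x⋆` with `q − x⋆ ∈ (θ/(σ_A+σ_B))•(A+B)(x⋆)`, i.e. to `J_{(θ/(σ_A+σ_B))(A+B)}(q)`. -/
theorem forward_backward_lipschitz {H : Type*} [NormedAddCommGroup H] [InnerProductSpace ℝ H]
    [CompleteSpace H]
    (A : H → Set H) (B : H → H) (αA αB κ θ σA σB γ : ℝ) (q : H)
    (hA : IsMaxMonotoneOp αA A)
    (hBmono : IsMonotoneOp αB (fun x => {B x}))
    (hκ : 0 < κ) (hLip : ∀ x y : H, ‖B x - B y‖ ≤ κ * ‖x - y‖)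
    (hθ : 0 < θ) (hσA : 0 < σA) (hσB : 0 < σB)
    (hA' : 0 < θ * αA + σA) (hB' : 0 < θ * αB + σB)
    (hγ : 0 < γ) (hγ' : γ < 2 * (θ * αB + σB) / (θ * κ + σB) ^ 2)
    (x : ℕ → H)
    (hx : ∀ k : ℕ,
      (1 / (1 + γ * σA)) •
          ((1 - γ * σB) • x k - (γ * θ) • B (x k) + (γ * (σA + σB)) • q) - x (k + 1) ∈
        (γ * θ / (1 + γ * σA)) • A (x (k + 1))) :
    ∃ xs : H,
      (q - xs ∈ (θ / (σA + σB)) • {w : H | ∃ u ∈ A xs, w = u + B xs}) ∧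
        (∀ z : H, q - z ∈ (θ / (σA + σB)) • {w : H | ∃ u ∈ A z, w = u + B z} → z = xs) ∧
          ∃ M c : ℝ, 0 ≤ M ∧ 0 ≤ c ∧ c < 1 ∧ ∀ k : ℕ, ‖x k - xs‖ ≤ M * c ^ k :=
  forward_backward_lipschitz_general A B αA αB κ θ σA σB γ q hA hBmono hκ hLip hθ hσA hσB hA' hγ hγ'
    x hx
end

section
/- (Best approximation with three sets — strengthened Ryu.) Let C₁, C₂, C₃ ⊆ H be nonempty closed convex sets with nonempty intersection C := C₁ ∩ C₂ ∩ C₃, and let q ∈ H be such that there exists x ∈ H with q − x ∈ N_{C₁}(x) + N_{C₂}(x) + N_{C₃}(x). Let β ∈ (0,1) and λ ∈ (0,1]. Let (x_k), (y_k) be sequences in H and define for all k: u_k := P_{C₁}(β·x_k + (1−β)q); v_k := P_{C₂}(β(u_k + y_k) − (2β − 1)q); w_k := P_{C₃}(β(u_k − x_k + v_k − y_k) + q); x_{k+1} = x_k + λ(w_k − u_k); y_{k+1} = y_k + λ(w_k − v_k). Then u_k → P_C(q) in norm. Furthermore, if λ ≠ 1, there is x ∈ H such that x_k ⇀ x weakly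 and P_{C₁}(β·x + (1−β)q) = P_C(q). -/
open scoped RealInnerProductSpace
open Filter Topology

/-- The normal cone to a set `C` at `x`. -/
def normalCone {H : Type*} [NormedAddCommGroup H] [InnerProductSpace ℝ H]
    (C : Set H) (x : H) : Set H :=
  {u : H | x ∈ C ∧ ∀ c ∈ C, ⟪u, c - x⟫ ≤ 0}

/-- `P` is the nearest-point projector onto `C`. -/
def IsProjector {H : Type*} [NormedAddCommGroup H] [InnerProductSpace ℝ H]
    (C : Set H) (P : H → H) : Prop :=
  ∀ z : H, P z ∈ C ∧ ∀ c ∈ C, ‖z - P z‖ ≤ ‖z - c‖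

/-!
Each step of the iteration is encoded by the variational inequalities of the three projections.
Writing `q - a = u₁ + u₂ + u₃` with `uᵢ ∈ N_{Cᵢ}(a)` shows `a = P_C q` and produces a fixed point
`(p, r)` of the iteration whose three projections all equal `a`. Monotonicity of the normal cones
turns the variational inequalities at `(x k, y k)` and at `(p, r)` into the Fejér inequality
`‖x (k+1) - p‖² + ‖y (k+1) - r‖² + 2λ(1-β)/β (‖u k - a‖² + ‖v k - a‖² + ‖w k - a‖²)
  ≤ ‖x k - p‖² + ‖y k - r‖²`,
so the defect is summable and `u k, v k, w k → a`. Since the graph of a normal cone is closed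
under weak–strong limits, every weak cluster point of `(x k, y k)` is again such a fixed point,
and Opial's lemma gives weak convergence of `x k` to a point `xl` with `P₁(β xl + (1-β) q) = a`.
-/

section Fejer

variable {X : Type*} [PseudoMetricSpace X]

def FejerMonotone (x : ℕ → X) (S : Set X) : Prop :=
  ∀ p ∈ S, Antitone fun k => dist (x k) p

variable {x : ℕ → X} {S : Set X} {p : X}

theorem FejerMonotone.exists_tendsto_dist (hx : FejerMonotone x S) (hp : p ∈ S) :
    ∃ A, Tendsto (fun k => dist (x k) p) atTop (𝓝 A) :=
  ⟨_, tendsto_atTop_ciInf (hx p hp) ⟨0, by rintro _ ⟨k, rfl⟩; exact dist_nonneg⟩⟩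

theorem FejerMonotone.isBounded_range (hx : FejerMonotone x S) (hS : S.Nonempty) :
    Bornology.IsBounded (Set.range x) := by
  obtain ⟨p, hp⟩ := hS
  refine (Metric.isBounded_iff_subset_closedBall p).2 ⟨dist (x 0) p, ?_⟩
  rintro _ ⟨k, rfl⟩
  exact hx p hp (Nat.zero_le k)

end Fejer

theorem summable_of_succ_add_le {a b : ℕ → ℝ} (ha : ∀ k, 0 ≤ a k) (hb : ∀ k, 0 ≤ b k)
    (h : ∀ k, a (k + 1) + b k ≤ a k) : Summable b := by
  have hsum (n : ℕ) : ∑ i ∈ Finset.range n, b i + a n ≤ a 0 := by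
    induction n with
    | zero => simp
    | succ n ih => rw [Finset.sum_range_succ]; linarith [h n]
  exact summable_of_sum_range_le hb fun n => by linarith [hsum n, ha n]

theorem tendsto_of_summable_norm_sub_sq {E : Type*} [SeminormedAddCommGroup E] {x : ℕ → E}
    {a : E} (h : Summable fun k => ‖x k - a‖ ^ 2) : Tendsto x atTop (𝓝 a) := by
  rw [tendsto_iff_norm_sub_tendsto_zero]
  simpa using h.tendsto_atTop_zero.sqrt


section WeakConvergence

variable {E : Type*} [NormedAddCommGroup E] [InnerProductSpace ℝ E]

def WeakTendsto (x : ℕ → E) (p : E) : Prop :=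
  ∀ z : E, Tendsto (fun k => ⟪x k, z⟫) atTop (𝓝 ⟪p, z⟫)

variable {x y : ℕ → E} {p r : E}

theorem Filter.Tendsto.weakTendsto (h : Tendsto x atTop (𝓝 p)) : WeakTendsto x p :=
  fun _ => h.inner tendsto_const_nhds

theorem WeakTendsto.add (hx : WeakTendsto x p) (hy : WeakTendsto y r) :
    WeakTendsto (fun k => x k + y k) (p + r) := fun z => by
  simpa only [inner_add_left] using (hx z).add (hy z)

theorem WeakTendsto.sub (hx : WeakTendsto x p) (hy : WeakTendsto y r) :
    WeakTendsto (fun k => x k - y k) (p - r) := fun z => by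
  simpa only [inner_sub_left] using (hx z).sub (hy z)

theorem WeakTendsto.const_smul (hx : WeakTendsto x p) (c : ℝ) :
    WeakTendsto (fun k => c • x k) (c • p) := fun z => by
  simpa only [real_inner_smul_left] using (hx z).const_mul c

theorem WeakTendsto.isBounded_range [CompleteSpace E] (hx : WeakTendsto x p) :
    Bornology.IsBounded (Set.range x) := by
  have hpt (z : E) : ∃ C, ∀ k, ‖InnerProductSpace.toDual ℝ E (x k) z‖ ≤ C := by
    obtain ⟨C, hC⟩ := (Metric.isBounded_range_of_tendsto _ (hx z)).exists_norm_le
    exact ⟨C, fun k => hC _ ⟨k, rfl⟩⟩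
  obtain ⟨C, hC⟩ := banach_steinhaus hpt
  refine isBounded_iff_forall_norm_le.2 ⟨C, ?_⟩
  rintro _ ⟨k, rfl⟩
  simpa using hC k

theorem WeakTendsto.tendsto_inner [CompleteSpace E] (hx : WeakTendsto x p)
    (hy : Tendsto y atTop (𝓝 r)) : Tendsto (fun k => ⟪x k, y k⟫) atTop (𝓝 ⟪p, r⟫) := by
  obtain ⟨M, hM⟩ := hx.isBounded_range.exists_norm_le
  have hsmall : Tendsto (fun k => ⟪x k, y k - r⟫) atTop (𝓝 0) := by
    refine squeeze_zero_norm (fun k => ?_)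
      (by simpa using (tendsto_iff_norm_sub_tendsto_zero.1 hy).const_mul M)
    exact (norm_inner_le_norm _ _).trans
      (mul_le_mul_of_nonneg_right (hM _ ⟨k, rfl⟩) (norm_nonneg _))
  simpa [inner_sub_right] using hsmall.add (hx r)

/-- Sequential Banach–Alaoglu in the dual of the separable closed span `K` of the sequence, which
is `K` itself by Riesz; testing against `P_K z` sees the same inner products as testing against `z`.
-/
theorem weakTendsto_subseq_of_isBounded [CompleteSpace E]
    (hx : Bornology.IsBounded (Set.range x)) :
    ∃ p : E, ∃ φ : ℕ → ℕ, StrictMono φ ∧ WeakTendsto (x ∘ φ) p := by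
  set K := (Submodule.span ℝ (Set.range x)).topologicalClosure
  have : TopologicalSpace.SeparableSpace K := by
    have := ((Set.countable_range x).isSeparable.span (R := ℝ)).closure
    rw [← Submodule.topologicalClosure_coe] at this
    exact this.separableSpace
  have hxK (k : ℕ) : x k ∈ K :=
    Submodule.le_topologicalClosure _ (Submodule.subset_span ⟨k, rfl⟩)
  obtain ⟨M, hM⟩ := hx.exists_norm_le
  let f (k : ℕ) := StrongDual.toWeakDual (InnerProductSpace.toDual ℝ K ⟨x k, hxK k⟩)
  have hf (k : ℕ) : f k ∈ WeakDual.toStrongDual ⁻¹' Metric.closedBall 0 M := by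
    simpa [f] using hM _ ⟨k, rfl⟩
  obtain ⟨g, -, φ, hφ, hlim⟩ := WeakDual.isSeqCompact_closedBall ℝ K 0 M hf
  refine ⟨(InnerProductSpace.toDual ℝ K).symm (WeakDual.toStrongDual g), φ, hφ, fun z => ?_⟩
  have := ((WeakDual.eval_continuous (K.orthogonalProjectionOnto z)).tendsto g).comp hlim
  convert this using 2 with k
  · simp [f, InnerProductSpace.toDual_apply_apply]
  · rw [← Submodule.inner_orthogonalProjectionOnto_eq_of_mem_left,
      InnerProductSpace.toDual_symm_apply, WeakDual.toStrongDual_apply]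

section Prod

variable {F : Type*} [NormedAddCommGroup F] [InnerProductSpace ℝ F]
  {z : ℕ → WithLp 2 (E × F)} {s : WithLp 2 (E × F)}

theorem WeakTendsto.fst (hz : WeakTendsto z s) : WeakTendsto (fun k => (z k).fst) s.fst :=
  fun h => by simpa using hz (WithLp.toLp 2 (h, 0))

theorem WeakTendsto.snd (hz : WeakTendsto z s) : WeakTendsto (fun k => (z k).snd) s.snd :=
  fun h => by simpa using hz (WithLp.toLp 2 (0, h))

end Prod

variable {S : Set E}

theorem FejerMonotone.eq_of_weakTendsto (hx : FejerMonotone x S) (hp : p ∈ S) (hr : r ∈ S)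
    {φ ψ : ℕ → ℕ} (hφ : Tendsto φ atTop atTop) (hψ : Tendsto ψ atTop atTop)
    (hxp : WeakTendsto (x ∘ φ) p) (hxr : WeakTendsto (x ∘ ψ) r) : p = r := by
  obtain ⟨A, hA⟩ := hx.exists_tendsto_dist hp
  obtain ⟨B, hB⟩ := hx.exists_tendsto_dist hr
  simp only [dist_eq_norm] at hA hB
  have hsq (k : ℕ) :
      2 * ⟪x k, r - p⟫ = ‖x k - p‖ ^ 2 - ‖x k - r‖ ^ 2 + (‖r‖ ^ 2 - ‖p‖ ^ 2) := by
    rw [norm_sub_sq_real, norm_sub_sq_real, inner_sub_right]; ring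
  have hlim : Tendsto (fun k => 2 * ⟪x k, r - p⟫) atTop
      (𝓝 (A ^ 2 - B ^ 2 + (‖r‖ ^ 2 - ‖p‖ ^ 2))) := by
    simpa only [hsq] using ((hA.pow 2).sub (hB.pow 2)).add_const _
  have h₁ := tendsto_nhds_unique ((hxp (r - p)).const_mul 2) (hlim.comp hφ)
  have h₂ := tendsto_nhds_unique ((hxr (r - p)).const_mul 2) (hlim.comp hψ)
  have : ⟪r - p, r - p⟫ ≤ 0 := by rw [inner_sub_left]; linarith
  exact (sub_eq_zero.1 (real_inner_self_nonpos.1 this)).symm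

/-- Opial's lemma. -/
theorem FejerMonotone.exists_weakTendsto [CompleteSpace E] (hx : FejerMonotone x S)
    (hS : S.Nonempty)
    (hcluster : ∀ p (φ : ℕ → ℕ), Tendsto φ atTop atTop → WeakTendsto (x ∘ φ) p → p ∈ S) :
    ∃ p ∈ S, WeakTendsto x p := by
  have hbdd := hx.isBounded_range hS
  obtain ⟨p, φ, hφ, hxp⟩ := weakTendsto_subseq_of_isBounded hbdd
  have hpS := hcluster p φ hφ.tendsto_atTop hxp
  refine ⟨p, hpS, fun h => tendsto_of_subseq_tendsto fun ns hns => ?_⟩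
  obtain ⟨r, ms, hms, hxr⟩ :=
    weakTendsto_subseq_of_isBounded (hbdd.subset (Set.range_comp_subset_range ns x))
  have hψ := hns.comp hms.tendsto_atTop
  obtain rfl := hx.eq_of_weakTendsto hpS (hcluster r _ hψ hxr) hφ.tendsto_atTop hψ hxp hxr
  exact ⟨ms, hxr h⟩

end WeakConvergence

section NormalCone

variable {H : Type*} [NormedAddCommGroup H] [InnerProductSpace ℝ H] {C D : Set H} {a b n m : H}

theorem smul_mem_normalCone (hn : n ∈ normalCone C a) {t : ℝ} (ht : 0 ≤ t) :
    t • n ∈ normalCone C a :=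
  ⟨hn.1, fun c hc => by
    rw [real_inner_smul_left]; exact mul_nonpos_of_nonneg_of_nonpos ht (hn.2 c hc)⟩

theorem add_mem_normalCone_inter (hn : n ∈ normalCone C a) (hm : m ∈ normalCone D a) :
    n + m ∈ normalCone (C ∩ D) a :=
  ⟨⟨hn.1, hm.1⟩, fun c hc => by
    rw [inner_add_left]; linarith [hn.2 c hc.1, hm.2 c hc.2]⟩

theorem inner_sub_sub_nonneg_of_mem_normalCone (hn : n ∈ normalCone C a)
    (hm : m ∈ normalCone C b) : 0 ≤ ⟪n - m, a - b⟫ := by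
  have h₁ := hn.2 b hm.1
  have h₂ := hm.2 a hn.1
  rw [← neg_sub a b, inner_neg_right] at h₁
  rw [inner_sub_left]
  linarith

theorem mem_normalCone_of_tendsto [CompleteSpace H] (hC : IsClosed C) {a : ℕ → H} {n : ℕ → H}
    (ha : Tendsto a atTop (𝓝 b)) (hn : WeakTendsto n m) (h : ∀ k, n k ∈ normalCone C (a k)) :
    m ∈ normalCone C b :=
  ⟨hC.mem_of_tendsto ha (Eventually.of_forall fun k => (h k).1), fun c hc =>
    le_of_tendsto' (hn.tendsto_inner (tendsto_const_nhds.sub ha)) fun k => (h k).2 c hc⟩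

variable {P : H → H}

theorem IsProjector.sub_mem_normalCone (hP : IsProjector C P) (hC : Convex ℝ C) (z : H) :
    z - P z ∈ normalCone C (P z) := by
  obtain ⟨hmem, hmin⟩ := hP z
  have : Nonempty C := ⟨⟨_, hmem⟩⟩
  have hbdd : BddBelow (Set.range fun c : C => ‖z - c‖) :=
    ⟨0, by rintro _ ⟨c, rfl⟩; exact norm_nonneg _⟩
  exact ⟨hmem, (norm_eq_iInf_iff_real_inner_le_zero hC hmem).1
    (le_antisymm (le_ciInf fun c => hmin c c.2) (ciInf_le hbdd ⟨P z, hmem⟩))⟩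

theorem IsProjector.eq_of_sub_mem_normalCone (hP : IsProjector C P) (hC : Convex ℝ C) {z : H}
    (h : z - a ∈ normalCone C a) : P z = a := by
  have := inner_sub_sub_nonneg_of_mem_normalCone (hP.sub_mem_normalCone hC z) h
  rw [sub_sub_sub_cancel_left, ← neg_sub, inner_neg_left, neg_nonneg] at this
  exact sub_eq_zero.1 (real_inner_self_nonpos.1 this)

end NormalCone

section Ryu

variable {H : Type*} [NormedAddCommGroup H] [InnerProductSpace ℝ H]

/-- `u`, `v`, `w` are the three projections computed from `(x, y)` in one step of the iteration,
each recorded through the variational inequality characterising it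
(`IsProjector.sub_mem_normalCone`). -/
def IsRyuTriple (C₁ C₂ C₃ : Set H) (q : H) (β : ℝ) (x y u v w : H) : Prop :=
  β • x + (1 - β) • q - u ∈ normalCone C₁ u ∧
    β • (u + y) - (2 * β - 1) • q - v ∈ normalCone C₂ v ∧
    β • (u - x + v - y) + q - w ∈ normalCone C₃ w

variable {C₁ C₂ C₃ : Set H} {q : H} {β lam : ℝ}

/-- The three hypotheses bound the cross terms `⟪X, W - U⟫ + ⟪Y, W - V⟫`; what is left of the
difference of the two sides is `-λ‖U - V‖² - λ(1 - λ)(‖U - W‖² + ‖V - W‖²)`. -/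
theorem ryu_norm_sq_le (hβ : 0 < β) (hlam : 0 ≤ lam) (hlam' : lam ≤ 1) {X Y U V W : H}
    (hU : 0 ≤ ⟪β • X - U, U⟫) (hV : 0 ≤ ⟪β • (U + Y) - V, V⟫)
    (hW : 0 ≤ ⟪β • (U - X + V - Y) - W, W⟫) :
    ‖X + lam • (W - U)‖ ^ 2 + ‖Y + lam • (W - V)‖ ^ 2
      + 2 * lam * (1 - β) / β * (‖U‖ ^ 2 + ‖V‖ ^ 2 + ‖W‖ ^ 2) ≤ ‖X‖ ^ 2 + ‖Y‖ ^ 2 := by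
  have hsum : β * (⟪X, W - U⟫ + ⟪Y, W - V⟫) + (‖U‖ ^ 2 + ‖V‖ ^ 2 + ‖W‖ ^ 2)
      ≤ β * (⟪U, V⟫ + ⟪U, W⟫ + ⟪V, W⟫) := by
    simp only [inner_sub_left, inner_add_left, inner_sub_right, real_inner_smul_left,
      real_inner_self_eq_norm_sq] at hU hV hW ⊢
    linarith
  have hl : 0 ≤ β * lam := by positivity
  have hl' : 0 ≤ β * lam * (1 - lam) := mul_nonneg hl (sub_nonneg.2 hlam')
  rw [norm_add_sq_real, norm_add_sq_real, norm_smul, norm_smul, real_inner_smul_right,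
    real_inner_smul_right, mul_pow, mul_pow, Real.norm_eq_abs, sq_abs, norm_sub_rev W U,
    norm_sub_rev W V, div_mul_eq_mul_div, ← le_sub_iff_add_le', div_le_iff₀ hβ]
  linear_combination 2 * lam * hsum
    + β * lam * (norm_sub_sq_real U V + norm_sub_sq_real U W + norm_sub_sq_real V W)
    + mul_nonneg hl (sq_nonneg ‖U - V‖)
    + mul_nonneg hl' (add_nonneg (sq_nonneg ‖U - W‖) (sq_nonneg ‖V - W‖))

variable {x y u v w x' y' u' v' w' : H}

theorem IsRyuTriple.norm_sq_le (h : IsRyuTriple C₁ C₂ C₃ q β x y u v w)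
    (h' : IsRyuTriple C₁ C₂ C₃ q β x' y' u' v' w') (hβ : 0 < β) (hlam : 0 ≤ lam)
    (hlam' : lam ≤ 1) :
    ‖x + lam • (w - u) - (x' + lam • (w' - u'))‖ ^ 2
      + ‖y + lam • (w - v) - (y' + lam • (w' - v'))‖ ^ 2
      + 2 * lam * (1 - β) / β * (‖u - u'‖ ^ 2 + ‖v - v'‖ ^ 2 + ‖w - w'‖ ^ 2)
      ≤ ‖x - x'‖ ^ 2 + ‖y - y'‖ ^ 2 := by
  have hU : 0 ≤ ⟪β • (x - x') - (u - u'), u - u'⟫ := by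
    convert inner_sub_sub_nonneg_of_mem_normalCone h.1 h'.1 using 2; module
  have hV : 0 ≤ ⟪β • ((u - u') + (y - y')) - (v - v'), v - v'⟫ := by
    convert inner_sub_sub_nonneg_of_mem_normalCone h.2.1 h'.2.1 using 2; module
  have hW : 0 ≤ ⟪β • ((u - u') - (x - x') + (v - v') - (y - y')) - (w - w'), w - w'⟫ := by
    convert inner_sub_sub_nonneg_of_mem_normalCone h.2.2 h'.2.2 using 2; module
  have hx : x + lam • (w - u) - (x' + lam • (w' - u'))
      = (x - x') + lam • ((w - w') - (u - u')) := by module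
  have hy : y + lam • (w - v) - (y' + lam • (w' - v'))
      = (y - y') + lam • ((w - w') - (v - v')) := by module
  rw [hx, hy]
  exact ryu_norm_sq_le hβ hlam hlam' hU hV hW

/-- The three conditions are the `uᵢ` scaled by `3(1 - β)`: the first two define `p` and `r`, and
their sum with the third is `3(1 - β)(q - a)`. -/
theorem exists_isRyuTriple_of_mem_normalCone (hβ : 0 < β) (hβ' : β ≤ 1) {a u₁ u₂ u₃ : H}
    (hu₁ : u₁ ∈ normalCone C₁ a) (hu₂ : u₂ ∈ normalCone C₂ a) (hu₃ : u₃ ∈ normalCone C₃ a)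
    (hq : q - a = u₁ + u₂ + u₃) : ∃ p r, IsRyuTriple C₁ C₂ C₃ q β p r a a a := by
  set s := 3 * (1 - β)
  have hs : 0 ≤ s := by positivity
  obtain ⟨p, hp⟩ : ∃ p : H, β • p = a - (1 - β) • q + s • u₁ :=
    ⟨_, smul_inv_smul₀ hβ.ne' _⟩
  obtain ⟨r, hr⟩ : ∃ r : H, β • r = (1 - β) • a + (2 * β - 1) • q + s • u₂ :=
    ⟨_, smul_inv_smul₀ hβ.ne' _⟩
  refine ⟨p, r, ?_, ?_, ?_⟩
  · convert smul_mem_normalCone hu₁ hs using 1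
    linear_combination (norm := module) hp
  · convert smul_mem_normalCone hu₂ hs using 1
    linear_combination (norm := module) hr
  · convert smul_mem_normalCone hu₃ hs using 1
    linear_combination (norm := module) s • hq - hp - hr

theorem IsRyuTriple.of_tendsto [CompleteSpace H] (hC₁ : IsClosed C₁) (hC₂ : IsClosed C₂)
    (hC₃ : IsClosed C₃) {x y u v w : ℕ → H} {p r a b c : H}
    (h : ∀ k, IsRyuTriple C₁ C₂ C₃ q β (x k) (y k) (u k) (v k) (w k))
    (hx : WeakTendsto x p) (hy : WeakTendsto y r) (hu : Tendsto u atTop (𝓝 a))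
    (hv : Tendsto v atTop (𝓝 b)) (hw : Tendsto w atTop (𝓝 c)) :
    IsRyuTriple C₁ C₂ C₃ q β p r a b c := by
  have hu' := hu.weakTendsto
  have hv' := hv.weakTendsto
  have hq : WeakTendsto (fun _ => q) q := tendsto_const_nhds.weakTendsto
  refine ⟨mem_normalCone_of_tendsto hC₁ hu ?_ fun k => (h k).1,
    mem_normalCone_of_tendsto hC₂ hv ?_ fun k => (h k).2.1,
    mem_normalCone_of_tendsto hC₃ hw ?_ fun k => (h k).2.2⟩
  · exact ((hx.const_smul β).add (hq.const_smul _)).sub hu'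
  · exact (((hu'.add hy).const_smul β).sub (hq.const_smul _)).sub hv'
  · exact (((((hu'.sub hx).add hv').sub hy).const_smul β).add hq).sub hw.weakTendsto

end Ryu

section RyuIteration

variable {H : Type*} [NormedAddCommGroup H] [InnerProductSpace ℝ H]
  {C₁ C₂ C₃ : Set H} {q : H} {β lam : ℝ} {x y u v w : ℕ → H} {p r a : H}

theorem ryu_fejer (hβ : 0 < β) (hlam : 0 ≤ lam) (hlam' : lam ≤ 1)
    (h : ∀ k, IsRyuTriple C₁ C₂ C₃ q β (x k) (y k) (u k) (v k) (w k))
    (hx : ∀ k, x (k + 1) = x k + lam • (w k - u k))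
    (hy : ∀ k, y (k + 1) = y k + lam • (w k - v k))
    (hfix : IsRyuTriple C₁ C₂ C₃ q β p r a a a) (k : ℕ) :
    ‖x (k + 1) - p‖ ^ 2 + ‖y (k + 1) - r‖ ^ 2
      + 2 * lam * (1 - β) / β * (‖u k - a‖ ^ 2 + ‖v k - a‖ ^ 2 + ‖w k - a‖ ^ 2)
      ≤ ‖x k - p‖ ^ 2 + ‖y k - r‖ ^ 2 := by
  simpa [hx, hy] using (h k).norm_sq_le hfix hβ hlam hlam'

theorem ryu_tendsto (hβ : 0 < β) (hβ' : β < 1) (hlam : 0 < lam) (hlam' : lam ≤ 1)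
    (h : ∀ k, IsRyuTriple C₁ C₂ C₃ q β (x k) (y k) (u k) (v k) (w k))
    (hx : ∀ k, x (k + 1) = x k + lam • (w k - u k))
    (hy : ∀ k, y (k + 1) = y k + lam • (w k - v k))
    (hfix : IsRyuTriple C₁ C₂ C₃ q β p r a a a) :
    Tendsto u atTop (𝓝 a) ∧ Tendsto v atTop (𝓝 a) ∧ Tendsto w atTop (𝓝 a) := by
  have hc : 0 < 2 * lam * (1 - β) / β := by have := sub_pos.2 hβ'; positivity
  have hsum := (summable_mul_left_iff hc.ne').1 <|
    summable_of_succ_add_le (a := fun k => ‖x k - p‖ ^ 2 + ‖y k - r‖ ^ 2)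
      (fun k => by positivity) (fun k => by positivity) (ryu_fejer hβ hlam.le hlam' h hx hy hfix)
  refine ⟨tendsto_of_summable_norm_sub_sq (hsum.of_nonneg_of_le (fun _ => by positivity) ?_),
    tendsto_of_summable_norm_sub_sq (hsum.of_nonneg_of_le (fun _ => by positivity) ?_),
    tendsto_of_summable_norm_sub_sq (hsum.of_nonneg_of_le (fun _ => by positivity) ?_)⟩ <;>
  intro k <;> linarith [sq_nonneg ‖u k - a‖, sq_nonneg ‖v k - a‖, sq_nonneg ‖w k - a‖]

theorem ryu_weakTendsto [CompleteSpace H] (hC₁ : IsClosed C₁) (hC₂ : IsClosed C₂)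
    (hC₃ : IsClosed C₃) (hβ : 0 < β) (hβ' : β < 1) (hlam : 0 < lam) (hlam' : lam ≤ 1)
    (h : ∀ k, IsRyuTriple C₁ C₂ C₃ q β (x k) (y k) (u k) (v k) (w k))
    (hx : ∀ k, x (k + 1) = x k + lam • (w k - u k))
    (hy : ∀ k, y (k + 1) = y k + lam • (w k - v k))
    (hfix : IsRyuTriple C₁ C₂ C₃ q β p r a a a) :
    ∃ p' r', WeakTendsto x p' ∧ IsRyuTriple C₁ C₂ C₃ q β p' r' a a a := by
  obtain ⟨hu, hv, hw⟩ := ryu_tendsto hβ hβ' hlam hlam' h hx hy hfix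
  let z (k : ℕ) : WithLp 2 (H × H) := WithLp.toLp 2 (x k, y k)
  let S : Set (WithLp 2 (H × H)) := {s | IsRyuTriple C₁ C₂ C₃ q β s.fst s.snd a a a}
  have hz : FejerMonotone z S := by
    intro s hs
    refine antitone_nat_of_succ_le fun k => ?_
    rw [dist_eq_norm, dist_eq_norm, ← sq_le_sq₀ (norm_nonneg _) (norm_nonneg _),
      WithLp.prod_norm_sq_eq_of_L2, WithLp.prod_norm_sq_eq_of_L2]
    have hstep := ryu_fejer hβ hlam.le hlam' h hx hy hs k
    have hdefect :
        0 ≤ 2 * lam * (1 - β) / β * (‖u k - a‖ ^ 2 + ‖v k - a‖ ^ 2 + ‖w k - a‖ ^ 2) := by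
      have := sub_pos.2 hβ'; positivity
    simp only [z, WithLp.sub_fst, WithLp.sub_snd, WithLp.toLp_fst, WithLp.toLp_snd]
    linarith
  obtain ⟨s, hs, hzs⟩ := hz.exists_weakTendsto ⟨WithLp.toLp 2 (p, r), hfix⟩
    fun _ φ hφ hzφ => IsRyuTriple.of_tendsto hC₁ hC₂ hC₃ (fun k => h (φ k)) hzφ.fst hzφ.snd
      (hu.comp hφ) (hv.comp hφ) (hw.comp hφ)
  exact ⟨s.fst, s.snd, hzs.fst, hs⟩

end RyuIteration

theorem best_approximation_S_Ryu_general {H : Type*} [NormedAddCommGroup H]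
    [InnerProductSpace ℝ H] [CompleteSpace H]
    (C₁ C₂ C₃ : Set H)
    (hC₁ : C₁.Nonempty ∧ IsClosed C₁ ∧ Convex ℝ C₁)
    (hC₂ : C₂.Nonempty ∧ IsClosed C₂ ∧ Convex ℝ C₂)
    (hC₃ : C₃.Nonempty ∧ IsClosed C₃ ∧ Convex ℝ C₃)
    (P₁ P₂ P₃ PC : H → H)
    (hP₁ : IsProjector C₁ P₁) (hP₂ : IsProjector C₂ P₂) (hP₃ : IsProjector C₃ P₃)
    (hPC : IsProjector (C₁ ∩ C₂ ∩ C₃) PC)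
    (q : H)
    (hq : ∃ x : H, ∃ u₁ ∈ normalCone C₁ x, ∃ u₂ ∈ normalCone C₂ x, ∃ u₃ ∈ normalCone C₃ x,
      q - x = u₁ + u₂ + u₃)
    (β lam : ℝ) (hβ : 0 < β) (hβ' : β < 1) (hlam : 0 < lam) (hlam' : lam ≤ 1)
    (x y u v w : ℕ → H)
    (hu : ∀ k : ℕ, u k = P₁ (β • x k + (1 - β) • q))
    (hv : ∀ k : ℕ, v k = P₂ (β • (u k + y k) - (2 * β - 1) • q))
    (hw : ∀ k : ℕ, w k = P₃ (β • (u k - x k + v k - y k) + q))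
    (hx : ∀ k : ℕ, x (k + 1) = x k + lam • (w k - u k))
    (hy : ∀ k : ℕ, y (k + 1) = y k + lam • (w k - v k)) :
    Tendsto u atTop (𝓝 (PC q)) ∧
      (lam ≠ 1 →
        ∃ xl : H,
          (∀ z : H, Tendsto (fun k => ⟪x k, z⟫) atTop (𝓝 ⟪xl, z⟫)) ∧
            P₁ (β • xl + (1 - β) • q) = PC q) := by
  obtain ⟨-, hC₁, hC₁'⟩ := hC₁
  obtain ⟨-, hC₂, hC₂'⟩ := hC₂
  obtain ⟨-, hC₃, hC₃'⟩ := hC₃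
  obtain ⟨a, u₁, hu₁, u₂, hu₂, u₃, hu₃, hqa⟩ := hq
  have hPCq : PC q = a := hPC.eq_of_sub_mem_normalCone ((hC₁'.inter hC₂').inter hC₃')
    (hqa ▸ add_mem_normalCone_inter (add_mem_normalCone_inter hu₁ hu₂) hu₃)
  have htriple (k : ℕ) : IsRyuTriple C₁ C₂ C₃ q β (x k) (y k) (u k) (v k) (w k) := by
    refine ⟨?_, ?_, ?_⟩
    · rw [hu k]; exact hP₁.sub_mem_normalCone hC₁' _
    · rw [hv k]; exact hP₂.sub_mem_normalCone hC₂' _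
    · rw [hw k]; exact hP₃.sub_mem_normalCone hC₃' _
  obtain ⟨p, r, hfix⟩ := exists_isRyuTriple_of_mem_normalCone hβ hβ'.le hu₁ hu₂ hu₃ hqa
  refine ⟨hPCq ▸ (ryu_tendsto hβ hβ' hlam hlam' htriple hx hy hfix).1, fun _ => ?_⟩
  obtain ⟨xl, yl, hxl, hfix'⟩ :=
    ryu_weakTendsto hC₁ hC₂ hC₃ hβ hβ' hlam hlam' htriple hx hy hfix
  exact ⟨xl, hxl, hPCq ▸ hP₁.eq_of_sub_mem_normalCone hC₁' hfix'.1⟩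

/-- Best approximation with three sets via strengthened Ryu splitting: `u_k → P_{C₁∩C₂∩C₃}(q)`
strongly; if `λ ≠ 1`, `(x_k)` converges weakly to a point `x` with
`P_{C₁}(βx + (1−β)q) = P_{C₁∩C₂∩C₃}(q)`. -/
theorem best_approximation_S_Ryu {H : Type*} [NormedAddCommGroup H]
    [InnerProductSpace ℝ H] [CompleteSpace H]
    (C₁ C₂ C₃ : Set H)
    (hC₁ : C₁.Nonempty ∧ IsClosed C₁ ∧ Convex ℝ C₁)
    (hC₂ : C₂.Nonempty ∧ IsClosed C₂ ∧ Convex ℝ C₂)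
    (hC₃ : C₃.Nonempty ∧ IsClosed C₃ ∧ Convex ℝ C₃)
    (hInt : (C₁ ∩ C₂ ∩ C₃).Nonempty)
    (P₁ P₂ P₃ PC : H → H)
    (hP₁ : IsProjector C₁ P₁) (hP₂ : IsProjector C₂ P₂) (hP₃ : IsProjector C₃ P₃)
    (hPC : IsProjector (C₁ ∩ C₂ ∩ C₃) PC)
    (q : H)
    (hq : ∃ x : H, ∃ u₁ ∈ normalCone C₁ x, ∃ u₂ ∈ normalCone C₂ x, ∃ u₃ ∈ normalCone C₃ x,
      q - x = u₁ + u₂ + u₃)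
    (β lam : ℝ) (hβ : 0 < β) (hβ' : β < 1) (hlam : 0 < lam) (hlam' : lam ≤ 1)
    (x y u v w : ℕ → H)
    (hu : ∀ k : ℕ, u k = P₁ (β • x k + (1 - β) • q))
    (hv : ∀ k : ℕ, v k = P₂ (β • (u k + y k) - (2 * β - 1) • q))
    (hw : ∀ k : ℕ, w k = P₃ (β • (u k - x k + v k - y k) + q))
    (hx : ∀ k : ℕ, x (k + 1) = x k + lam • (w k - u k))
    (hy : ∀ k : ℕ, y (k + 1) = y k + lam • (w k - v k)) :
    Tendsto u atTop (𝓝 (PC q)) ∧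
      (lam ≠ 1 →
        ∃ xl : H,
          (∀ z : H, Tendsto (fun k => ⟪x k, z⟫) atTop (𝓝 ⟪xl, z⟫)) ∧
            P₁ (β • xl + (1 - β) • q) = PC q) :=
  best_approximation_S_Ryu_general C₁ C₂ C₃ hC₁ hC₂ hC₃ P₁ P₂ P₃ PC hP₁ hP₂ hP₃ hPC q hq β lam hβ
    hβ' hlam hlam' x y u v w hu hv hw hx hy
end
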